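/- arXiv:2302.10251 — 3 statements merged into one kernel-verified Lean document; each statement's English description precedes it below -/
import Mathlib

section
/- Let α ∈ (0,1), γ > 1, and let f : ℝ^N × (0,∞) → ℝ satisfy ‖f(·,t)‖_{L^1(ℝ^N)} ≤ C(1+t)^{−γ} for all t > 0. Define M_f(t) = ∫_{ℝ^N} f(x,t) dx, M(t) = ∫_0^t M_f(s)(t−s)^{α−1} ds, and M_∞ = ∫_0^∞ M_f(s) ds. Then t^{1−α} M(t) → M_∞ as t → ∞. -/
/-!
For `s ≤ t / 2` the rescaled kernel `t ^ (1 - α) * (t - s) ^ (α - 1) = (t / (t - s)) ^ (1 - α)`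
is bounded by `2 ^ (1 - α)` and tends to `1`, so dominated convergence (with dominating function a
multiple of the integrable `|M_f|`) handles the integral over `(0, t / 2)`. On `(t / 2, t)` the
decay `|M_f(s)| ≤ C s ^ (-γ)` and `∫ (t - s) ^ (α - 1) = (t / 2) ^ α / α` bound the rescaled
integral by a multiple of `t ^ (1 - γ)`, which tends to `0` because `γ > 1`.
-/

open MeasureTheory Real Set Filter intervalIntegral

open scoped Topology

lemma integrableOn_Ioi_one_add_rpow_neg {γ : ℝ} (hγ : 1 < γ) :
    IntegrableOn (fun s : ℝ => (1 + s) ^ (-γ)) (Ioi 0) := by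
  have hnorm := integrable_one_add_norm (E := ℝ) (μ := volume) (by simpa using hγ)
  refine hnorm.integrableOn.congr_fun (fun s hs => ?_) measurableSet_Ioi
  simp only [Real.norm_of_nonneg (le_of_lt hs)]

lemma intervalIntegrable_sub_rpow_sub_one {α : ℝ} (hα : 0 < α) (t a b : ℝ) :
    IntervalIntegrable (fun s : ℝ => (t - s) ^ (α - 1)) volume a b := by
  simpa using (intervalIntegrable_rpow' (r := α - 1) (a := t - a) (b := t - b)
    (by linarith)).comp_sub_left t

lemma intervalIntegrable_mul_sub_rpow_sub_one {M : ℝ → ℝ} {α K a b : ℝ} (hα : 0 < α)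
    (hMm : AEStronglyMeasurable M) (hM : ∀ s ∈ Ioc a b, |M s| ≤ K) (hab : a ≤ b) (t : ℝ) :
    IntervalIntegrable (fun s => M s * (t - s) ^ (α - 1)) volume a b := by
  rw [intervalIntegrable_iff_integrableOn_Ioc_of_le hab]
  refine (intervalIntegrable_sub_rpow_sub_one hα t a b).1.bdd_mul (c := K) hMm.restrict ?_
  filter_upwards [ae_restrict_mem measurableSet_Ioc] with s hs using hM s hs

lemma integral_sub_rpow_sub_one {α : ℝ} (hα : 0 < α) (a t : ℝ) :
    ∫ s in a..t, (t - s) ^ (α - 1) = (t - a) ^ α / α := by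
  rw [integral_comp_sub_left (fun u : ℝ => u ^ (α - 1)) t, sub_self,
    integral_rpow (Or.inl (by linarith)), sub_add_cancel, zero_rpow hα.ne', sub_zero]

lemma rpow_one_sub_mul_sub_rpow_sub_one {α t s : ℝ} (ht : 0 ≤ t) (hst : s < t) :
    t ^ (1 - α) * (t - s) ^ (α - 1) = (t / (t - s)) ^ (1 - α) := by
  have hts : 0 < t - s := by linarith
  rw [div_rpow ht hts.le, show α - 1 = -(1 - α) by ring, rpow_neg hts.le, div_eq_mul_inv]

lemma div_sub_rpow_le_two_rpow {α t s : ℝ} (hα : α ≤ 1) (ht : 0 < t) (hst : s ≤ t / 2) :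
    (t / (t - s)) ^ (1 - α) ≤ 2 ^ (1 - α) := by
  have hts : 0 < t - s := by linarith
  refine rpow_le_rpow (div_nonneg ht.le hts.le) ?_ (by linarith)
  rw [div_le_iff₀ hts]; linarith

lemma tendsto_div_sub_rpow (α s : ℝ) :
    Tendsto (fun t : ℝ => (t / (t - s)) ^ (1 - α)) atTop (𝓝 1) := by
  have h : Tendsto (fun t : ℝ => t / (t - s)) atTop (𝓝 1) := by
    have hinv : Tendsto (fun t : ℝ => (1 - s / t)⁻¹) atTop (𝓝 1) := by
      have hsub := (tendsto_const_nhds (x := (1 : ℝ))).sub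
        ((tendsto_const_nhds (x := s)).div_atTop tendsto_id)
      simpa using hsub.inv₀ (by norm_num)
    refine hinv.congr' ?_
    filter_upwards [eventually_gt_atTop 0] with t ht
    rw [one_sub_div ht.ne', inv_div]
  simpa using h.rpow_const (p := 1 - α) (Or.inl one_ne_zero)

theorem tendsto_rpow_mul_integral_zero_half_mul_sub_rpow {M : ℝ → ℝ} {α : ℝ}
    (hα : α ≤ 1) (hM : IntegrableOn M (Ioi 0)) :
    Tendsto (fun t => t ^ (1 - α) * ∫ s in 0..t / 2, M s * (t - s) ^ (α - 1)) atTop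
      (𝓝 (∫ s in Ioi 0, M s)) := by
  have hF : ∀ᶠ t in atTop,
      ∫ s in Ioi 0, (Ioc 0 (t / 2)).indicator (fun s => M s * (t / (t - s)) ^ (1 - α)) s =
        t ^ (1 - α) * ∫ s in 0..t / 2, M s * (t - s) ^ (α - 1) := by
    filter_upwards [eventually_gt_atTop 0] with t ht
    rw [MeasureTheory.integral_indicator measurableSet_Ioc,
      Measure.restrict_restrict measurableSet_Ioc, inter_eq_left.mpr Ioc_subset_Ioi_self,
      integral_of_le (by positivity), ← MeasureTheory.integral_const_mul]
    refine setIntegral_congr_fun measurableSet_Ioc fun s hs => ?_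
    rw [mul_left_comm, rpow_one_sub_mul_sub_rpow_sub_one ht.le (by linarith [hs.2])]
  refine Tendsto.congr' hF (tendsto_integral_filter_of_dominated_convergence
    (fun s => 2 ^ (1 - α) * ‖M s‖) ?_ ?_ (hM.norm.const_mul _) ?_)
  · refine Eventually.of_forall fun t => AEStronglyMeasurable.indicator ?_ measurableSet_Ioc
    exact hM.aestronglyMeasurable.mul (Measurable.aestronglyMeasurable (by fun_prop))
  · filter_upwards [eventually_gt_atTop 0] with t ht
    refine Eventually.of_forall fun s => ?_
    by_cases hs : s ∈ Ioc 0 (t / 2)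
    · have hts : 0 ≤ t - s := by linarith [hs.2]
      rw [indicator_of_mem hs, norm_mul, mul_comm,
        norm_of_nonneg (rpow_nonneg (div_nonneg ht.le hts) _)]
      exact mul_le_mul_of_nonneg_right (div_sub_rpow_le_two_rpow hα ht hs.2) (norm_nonneg _)
    · rw [indicator_of_notMem hs, norm_zero]
      positivity
  · filter_upwards [ae_restrict_mem measurableSet_Ioi] with s (hs : 0 < s)
    have hlim := (tendsto_div_sub_rpow α s).const_mul (M s)
    rw [mul_one] at hlim
    refine hlim.congr' ?_
    filter_upwards [eventually_ge_atTop (2 * s)] with t hts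
    rw [indicator_of_mem (show s ∈ Ioc 0 (t / 2) from ⟨hs, by linarith⟩)]

theorem tendsto_rpow_mul_integral_half_self_mul_sub_rpow {M : ℝ → ℝ} {α γ C : ℝ}
    (hα : 0 < α) (hγ : 1 < γ) (hM : ∀ s > 0, |M s| ≤ C * s ^ (-γ)) :
    Tendsto (fun t => t ^ (1 - α) * ∫ s in t / 2..t, M s * (t - s) ^ (α - 1)) atTop
      (𝓝 0) := by
  have hC : 0 ≤ C := by simpa using (abs_nonneg _).trans (hM 1 one_pos)
  have hbound : ∀ t > 0, ‖t ^ (1 - α) * ∫ s in t / 2..t, M s * (t - s) ^ (α - 1)‖ ≤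
      C * 2 ^ (1 - α) / α * (t / 2) ^ (1 - γ) := by
    intro t ht
    have hu : 0 < t / 2 := by positivity
    have hI : ‖∫ s in t / 2..t, M s * (t - s) ^ (α - 1)‖ ≤
        C * (t / 2) ^ (-γ) * ((t / 2) ^ α / α) := by
      calc _ ≤ ∫ s in t / 2..t, C * (t / 2) ^ (-γ) * (t - s) ^ (α - 1) := by
            refine norm_integral_le_of_norm_le (by linarith) (Eventually.of_forall fun s hs => ?_)
              ((intervalIntegrable_sub_rpow_sub_one hα t _ _).const_mul _)
            rw [norm_mul, norm_of_nonneg (rpow_nonneg (sub_nonneg.mpr hs.2) _)]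
            refine mul_le_mul_of_nonneg_right ?_ (rpow_nonneg (sub_nonneg.mpr hs.2) _)
            calc ‖M s‖ ≤ C * s ^ (-γ) := hM s (hu.trans hs.1)
              _ ≤ C * (t / 2) ^ (-γ) :=
                mul_le_mul_of_nonneg_left (rpow_le_rpow_of_nonpos hu hs.1.le (by linarith)) hC
        _ = C * (t / 2) ^ (-γ) * ((t / 2) ^ α / α) := by
          rw [intervalIntegral.integral_const_mul, integral_sub_rpow_sub_one hα, sub_half]
    calc _ = t ^ (1 - α) * ‖∫ s in t / 2..t, M s * (t - s) ^ (α - 1)‖ := by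
          rw [norm_mul, norm_of_nonneg (rpow_nonneg ht.le _)]
      _ ≤ t ^ (1 - α) * (C * (t / 2) ^ (-γ) * ((t / 2) ^ α / α)) := by gcongr
      _ = C * 2 ^ (1 - α) / α * ((t / 2) ^ (1 - α) * (t / 2) ^ (-γ) * (t / 2) ^ α) := by
          have ht2 : t ^ (1 - α) = 2 ^ (1 - α) * (t / 2) ^ (1 - α) := by
            rw [← mul_rpow zero_le_two hu.le, mul_div_cancel₀ t two_ne_zero]
          rw [ht2]
          ring
      _ = C * 2 ^ (1 - α) / α * (t / 2) ^ (1 - γ) := by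
          rw [← rpow_add hu, ← rpow_add hu]
          ring_nf
  have hdecay : Tendsto (fun t : ℝ => (t / 2) ^ (1 - γ)) atTop (𝓝 0) := by
    simpa [Function.comp_def] using (tendsto_rpow_neg_atTop (by linarith : 0 < γ - 1)).comp
      (tendsto_id.atTop_div_const two_pos)
  refine squeeze_zero_norm' ?_ (by simpa using hdecay.const_mul (C * 2 ^ (1 - α) / α))
  filter_upwards [eventually_gt_atTop 0] with t ht
  exact hbound t ht

theorem tendsto_rpow_mul_integral_mul_sub_rpow {M : ℝ → ℝ} {α γ C : ℝ} (hα₀ : 0 < α)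
    (hα₁ : α ≤ 1) (hγ : 1 < γ) (hMm : AEStronglyMeasurable M)
    (hM : ∀ s > 0, |M s| ≤ C * (1 + s) ^ (-γ)) :
    Tendsto (fun t => t ^ (1 - α) * ∫ s in 0..t, M s * (t - s) ^ (α - 1)) atTop
      (𝓝 (∫ s in Ioi 0, M s)) := by
  have hC : 0 ≤ C :=
    nonneg_of_mul_nonneg_left ((abs_nonneg _).trans (hM 1 one_pos)) (by positivity)
  have hMC : ∀ s > 0, |M s| ≤ C := fun s hs => (hM s hs).trans <|
    mul_le_of_le_one_right hC (rpow_le_one_of_one_le_of_nonpos (by linarith) (by linarith))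
  have hMint : IntegrableOn M (Ioi 0) := by
    refine ((integrableOn_Ioi_one_add_rpow_neg hγ).const_mul C).mono' hMm.restrict ?_
    filter_upwards [ae_restrict_mem measurableSet_Ioi] with s hs using hM s hs
  have hMdecay : ∀ s > 0, |M s| ≤ C * s ^ (-γ) := fun s hs => (hM s hs).trans <|
    mul_le_mul_of_nonneg_left (rpow_le_rpow_of_nonpos hs (by linarith) (by linarith)) hC
  have hlim := (tendsto_rpow_mul_integral_zero_half_mul_sub_rpow hα₁ hMint).add
    (tendsto_rpow_mul_integral_half_self_mul_sub_rpow hα₀ hγ hMdecay)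
  rw [add_zero] at hlim
  refine hlim.congr' ?_
  filter_upwards [eventually_gt_atTop 0] with t ht
  have hI : ∀ a b, 0 ≤ a → a ≤ b →
      IntervalIntegrable (fun s => M s * (t - s) ^ (α - 1)) volume a b :=
    fun a b ha hab => intervalIntegrable_mul_sub_rpow_sub_one hα₀ hMm
      (fun s hs => hMC s (ha.trans_lt hs.1)) hab t
  rw [← mul_add, integral_add_adjacent_intervals (hI 0 (t / 2) le_rfl (by linarith))
    (hI (t / 2) t (by linarith) (by linarith))]

theorem stmt7_general (N : ℕ) (α γ C : ℝ)
    (hα : α ∈ Set.Ioo (0:ℝ) 1) (hγ : 1 < γ)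
    (f : EuclideanSpace ℝ (Fin N) → ℝ → ℝ)
    (hsize : ∀ t > (0:ℝ), (∫ x, |f x t|) ≤ C * (1 + t) ^ (-γ))
    (hmeas : Measurable fun t : ℝ => ∫ x, f x t) :
    Tendsto (fun t : ℝ => t ^ (1 - α) *
        ∫ s in (0:ℝ)..t, (∫ x, f x s) * (t - s) ^ (α - 1))
      atTop (nhds (∫ s in Set.Ioi (0:ℝ), ∫ x, f x s)) :=
  tendsto_rpow_mul_integral_mul_sub_rpow hα.1 hα.2.le hγ hmeas.aestronglyMeasurable
    fun s hs => abs_integral_le_integral_abs.trans (hsize s hs)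

theorem stmt7 (N : ℕ) (hN : 0 < N) (α γ C : ℝ)
    (hα : α ∈ Set.Ioo (0:ℝ) 1) (hγ : 1 < γ) (hC : 0 < C)
    (f : EuclideanSpace ℝ (Fin N) → ℝ → ℝ)
    (hint : ∀ t > (0:ℝ), Integrable (fun x => f x t))
    (hsize : ∀ t > (0:ℝ), (∫ x, |f x t|) ≤ C * (1 + t) ^ (-γ))
    (hmeas : Measurable fun t : ℝ => ∫ x, f x t) :
    Tendsto (fun t : ℝ => t ^ (1 - α) *
        ∫ s in (0:ℝ)..t, (∫ x, f x s) * (t - s) ^ (α - 1))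
      atTop (nhds (∫ s in Set.Ioi (0:ℝ), ∫ x, f x s)) :=
  stmt7_general N α γ C hα hγ f hsize hmeas
end

section
/- Let α ∈ (0,1) and let h : (0,∞) → ℝ satisfy |h(s)(1+s) − M_0| → 0 as s → ∞ for some constant M_0, and |h(s)| ≤ C(1+s)^{−1} for all s > 0. Define M(t) = ∫_0^t h(s)(t−s)^{α−1} ds. Then M(t) = M_0 t^{α−1} log t (1 + o(1)) as t → ∞; that is, t^{1−α} M(t) / log t → M_0. -/
open MeasureTheory Real Set Filter intervalIntegral

lemma ker_int {α : ℝ} (hα : 0 < α) (t a b : ℝ) :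
    IntervalIntegrable (fun s => (t - s) ^ (α - 1)) volume a b := by
  have H := (intervalIntegral.intervalIntegrable_rpow' (a := t - a) (b := t - b)
    (r := α - 1) (by linarith)).comp_sub_left t
  simp only [sub_sub_cancel] at H
  exact H

lemma ker_comp {α : ℝ} (hα : 0 < α) {t : ℝ} (ht : 0 < t) :
    (∫ s in (0:ℝ)..t, (t - s) ^ (α - 1)) = t ^ α / α := by
  have := intervalIntegral.integral_comp_sub_left (a := (0:ℝ)) (b := t)
    (fun x => x ^ (α - 1)) t
  simp only [sub_zero, sub_self] at this
  rw [this, integral_rpow (Or.inl (by linarith))]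
  rw [Real.zero_rpow (by linarith), sub_add_cancel]
  ring_nf

lemma mul_ker_int {α : ℝ} (hα : 0 < α) {t : ℝ} (ht : 0 < t) (f : ℝ → ℝ) {B : ℝ}
    (hf : Measurable f) (hB : ∀ s ∈ Set.Ioc (0:ℝ) t, |f s| ≤ B) :
    IntervalIntegrable (fun s => f s * (t - s) ^ (α - 1)) volume 0 t := by
  apply IntervalIntegrable.mono_fun' ((ker_int hα t 0 t).const_mul B)
  · exact (hf.mul (by fun_prop : Measurable fun s : ℝ => (t - s) ^ (α - 1))).aestronglyMeasurable
  · rw [Set.uIoc_of_le ht.le]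
    refine (ae_restrict_iff' measurableSet_Ioc).2 (ae_of_all _ fun s hs => ?_)
    have h1 : (0:ℝ) ≤ (t - s) ^ (α - 1) := Real.rpow_nonneg (by linarith [hs.2]) _
    have := hB s hs
    calc ‖f s * (t - s) ^ (α - 1)‖ = |f s| * (t - s) ^ (α - 1) := by
          rw [norm_mul, Real.norm_eq_abs, Real.norm_eq_abs, abs_of_nonneg h1]
      _ ≤ B * (t - s) ^ (α - 1) := by nlinarith [abs_nonneg (f s)]

lemma one_div_int {t : ℝ} (ht : 0 ≤ t) : (∫ s in (0:ℝ)..t, (1+s)⁻¹) = Real.log (1+t) := by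
  have := intervalIntegral.integral_comp_add_left (a := (0:ℝ)) (b := t) (fun x => x⁻¹) 1
  simp only [add_zero] at this
  have hz : (0:ℝ) ∉ Set.uIcc 1 (1+t) := by
    rw [Set.uIcc_of_le (by linarith)]
    intro hmem
    exact absurd hmem.1 (by norm_num)
  rw [this, integral_inv hz, Real.log_div (by linarith) one_ne_zero,
    Real.log_one, sub_zero]

lemma inv_ker_int {α : ℝ} (hα : 0 < α) {t : ℝ} (ht : 0 < t) :
    IntervalIntegrable (fun s => (1+s)⁻¹ * (t - s) ^ (α - 1)) volume 0 t := by
  refine mul_ker_int hα ht _ (by fun_prop) (B := 1) fun s hs => ?_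
  have h1s : (0:ℝ) < 1 + s := by linarith [hs.1]
  rw [abs_of_nonneg (by positivity)]
  rw [inv_le_one_iff₀]; right; linarith [hs.1]

lemma invc_int {t : ℝ} (ht : 0 < t) (c : ℝ) :
    IntervalIntegrable (fun s => (1+s)⁻¹ * c) volume 0 t := by
  apply ContinuousOn.intervalIntegrable
  apply ContinuousOn.mul _ continuousOn_const
  apply ContinuousOn.inv₀ (by fun_prop)
  intro x hx
  rw [Set.uIcc_of_le ht.le] at hx
  have := hx.1; positivity

lemma L_split {α : ℝ} (hα : 0 < α) {t : ℝ} (ht : 0 < t) :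
    (∫ s in (0:ℝ)..t, (1+s)⁻¹ * (t - s) ^ (α - 1)) =
      (∫ s in (0:ℝ)..t, (1+s)⁻¹ * ((t - s) ^ (α - 1) - t ^ (α - 1)))
        + t ^ (α - 1) * Real.log (1+t) := by
  have h1 : IntervalIntegrable (fun s => (1+s)⁻¹ * (t - s) ^ (α - 1)) volume 0 t :=
    inv_ker_int hα ht
  have h2 := invc_int ht (t ^ (α - 1))
  have key : (∫ s in (0:ℝ)..t, ((1+s)⁻¹ * (t - s) ^ (α - 1) - (1+s)⁻¹ * t ^ (α-1)))
      = (∫ s in (0:ℝ)..t, (1+s)⁻¹ * (t - s) ^ (α - 1))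
        - ∫ s in (0:ℝ)..t, (1+s)⁻¹ * t ^ (α-1) := intervalIntegral.integral_sub h1 h2
  have e1 : (∫ s in (0:ℝ)..t, (1+s)⁻¹ * ((t - s) ^ (α - 1) - t ^ (α - 1)))
      = ∫ s in (0:ℝ)..t, ((1+s)⁻¹ * (t - s) ^ (α - 1) - (1+s)⁻¹ * t ^ (α-1)) := by
    congr 1; funext s; ring
  have e2 : (∫ s in (0:ℝ)..t, (1+s)⁻¹ * t ^ (α-1)) = Real.log (1+t) * t ^ (α-1) := by
    rw [intervalIntegral.integral_mul_const, one_div_int ht.le]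
  rw [e1, key, e2]; ring

lemma D_nonneg {α : ℝ} (hα : α ∈ Set.Ioo (0:ℝ) 1) {t : ℝ} (ht : 0 < t) :
    0 ≤ ∫ s in (0:ℝ)..t, (1+s)⁻¹ * ((t - s) ^ (α - 1) - t ^ (α - 1)) := by
  apply intervalIntegral.integral_nonneg_of_ae_restrict ht.le
  have hne : ∀ᵐ s : ℝ ∂(volume.restrict (Set.Icc 0 t)), s ≠ t := by
    apply ae_restrict_of_ae
    simp only [ae_iff, not_not]
    exact nonpos_iff_eq_zero.mp (le_of_eq (by simpa using (measure_singleton t).symm))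
  filter_upwards [ae_restrict_mem measurableSet_Icc, hne] with s hs hst
  have hts : 0 < t - s := lt_of_le_of_ne (by linarith [hs.2]) (by intro h; exact hst (by linarith))
  have key : t ^ (α - 1) ≤ (t - s) ^ (α - 1) :=
    Real.rpow_le_rpow_of_nonpos hts (by linarith [hs.1]) (by linarith [hα.2])
  have h1s : (0:ℝ) < 1 + s := by linarith [hs.1]
  have := sub_nonneg.mpr key
  positivity

lemma D_le {α : ℝ} (hα : α ∈ Set.Ioo (0:ℝ) 1) {t : ℝ} (ht : 0 < t) :
    (∫ s in (0:ℝ)..t, (1+s)⁻¹ * ((t - s) ^ (α - 1) - t ^ (α - 1))) ≤ t ^ (α - 1) / α := by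
  have hint2 : IntervalIntegrable (fun s => (1/t) * (t - s) ^ (α - 1)) volume 0 t :=
    (ker_int hα.1 t 0 t).const_mul _
  have e1 : ∀ s, (1+s)⁻¹ * ((t - s) ^ (α - 1) - t ^ (α - 1))
      = (1+s)⁻¹ * (t - s) ^ (α - 1) - (1+s)⁻¹ * t ^ (α - 1) := fun s => by ring
  have hint1' : IntervalIntegrable
      (fun s => (1+s)⁻¹ * (t - s) ^ (α - 1) - (1+s)⁻¹ * t ^ (α - 1)) volume 0 t :=
    (inv_ker_int hα.1 ht).sub (invc_int ht _)
  have hmono0 : (∫ s in (0:ℝ)..t, ((1+s)⁻¹ * (t - s) ^ (α - 1) - (1+s)⁻¹ * t ^ (α - 1)))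
      ≤ ∫ s in (0:ℝ)..t, (1/t) * (t - s) ^ (α - 1) := by
    apply intervalIntegral.integral_mono_on ht.le hint1' hint2
    intro s hs
    rw [← e1]
    have h1s : (0:ℝ) < 1 + s := by linarith [hs.1]
    rcases eq_or_lt_of_le hs.2 with heq | hst
    · rw [heq, sub_self, Real.zero_rpow (show α - 1 ≠ 0 from (by linarith [hα.2] : α - 1 < 0).ne)]
      have h2 : (0:ℝ) < t ^ (α - 1) := Real.rpow_pos_of_pos ht _
      have h1t : (0:ℝ) < 1 + t := by linarith
      rw [mul_zero, zero_sub]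
      apply mul_nonpos_of_nonneg_of_nonpos (by positivity)
      linarith
    · have hts : 0 < t - s := by linarith
      have hk : (0:ℝ) < (t - s) ^ (α - 1) := Real.rpow_pos_of_pos hts _
      have key : (t - s) ^ α ≤ t ^ α := Real.rpow_le_rpow hts.le (by linarith [hs.1]) hα.1.le
      have ea : (t - s) ^ α = (t - s) ^ (α - 1) * (t - s) := by
        rw [← Real.rpow_add_one hts.ne' (α - 1)]; ring_nf
      have eb : t ^ α = t ^ (α - 1) * t := by
        rw [← Real.rpow_add_one ht.ne' (α - 1)]; ring_nf
      rw [ea, eb] at key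
      have hdiv : ((t - s) ^ (α - 1) - t ^ (α - 1)) / (1 + s) ≤ (t - s) ^ (α - 1) / t := by
        rw [div_le_div_iff₀ h1s ht]; nlinarith [hs.1]
      calc (1+s)⁻¹ * ((t - s) ^ (α - 1) - t ^ (α - 1))
          = ((t - s) ^ (α - 1) - t ^ (α - 1)) / (1 + s) := by rw [inv_mul_eq_div]
        _ ≤ (t - s) ^ (α - 1) / t := hdiv
        _ = (1/t) * (t - s) ^ (α - 1) := by ring
  have hmono : (∫ s in (0:ℝ)..t, (1+s)⁻¹ * ((t - s) ^ (α - 1) - t ^ (α - 1)))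
      ≤ ∫ s in (0:ℝ)..t, (1/t) * (t - s) ^ (α - 1) := by
    simp only [e1]; exact hmono0
  have hcomp : (∫ s in (0:ℝ)..t, (1/t) * (t - s) ^ (α - 1)) = t ^ (α - 1) / α := by
    rw [intervalIntegral.integral_const_mul, ker_comp hα.1 ht]
    rw [show t ^ α = t ^ (α - 1) * t by rw [← Real.rpow_add_one ht.ne' (α - 1)]; ring_nf]
    field_simp
  linarith [hmono, le_of_eq hcomp]

lemma log_ratio : Tendsto (fun t => Real.log (1+t) / Real.log t) atTop (nhds 1) := by
  apply tendsto_of_tendsto_of_tendsto_of_le_of_le' (g := fun _ => (1:ℝ))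
    (h := fun t => 1 + Real.log 2 / Real.log t) tendsto_const_nhds
  · have h0 : Tendsto (fun t : ℝ => Real.log 2 / Real.log t) atTop (nhds 0) :=
      Tendsto.div_atTop tendsto_const_nhds Real.tendsto_log_atTop
    simpa using tendsto_const_nhds.add h0
  · filter_upwards [eventually_ge_atTop (2:ℝ)] with t ht
    have hlt : 0 < Real.log t := Real.log_pos (by linarith)
    rw [le_div_iff₀ hlt, one_mul]
    exact Real.log_le_log (by linarith) (by linarith)
  · filter_upwards [eventually_ge_atTop (2:ℝ)] with t ht
    have hlt : 0 < Real.log t := Real.log_pos (by linarith)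
    have h1 : Real.log (1+t) ≤ Real.log 2 + Real.log t := by
      rw [← Real.log_mul (by norm_num) (by linarith)]
      exact Real.log_le_log (by linarith) (by linarith)
    rw [div_le_iff₀ hlt, add_mul, one_mul, div_mul_cancel₀ _ hlt.ne']
    linarith

lemma A_lim {α : ℝ} (hα : α ∈ Set.Ioo (0:ℝ) 1) :
    Tendsto (fun t => t ^ (1-α) * (∫ s in (0:ℝ)..t, (1+s)⁻¹ * (t - s) ^ (α - 1)) / Real.log t)
      atTop (nhds 1) := by
  have hD : Tendsto (fun t => t ^ (1-α) *
      (∫ s in (0:ℝ)..t, (1+s)⁻¹ * ((t - s) ^ (α - 1) - t ^ (α - 1))) / Real.log t)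
      atTop (nhds 0) := by
    apply tendsto_of_tendsto_of_tendsto_of_le_of_le' (g := fun _ => (0:ℝ))
      (h := fun t => (1/α) / Real.log t) tendsto_const_nhds
    · exact Tendsto.div_atTop tendsto_const_nhds Real.tendsto_log_atTop
    · filter_upwards [eventually_gt_atTop (1:ℝ)] with t ht
      have h1 : (0:ℝ) < t := by linarith
      have h2 : 0 < Real.log t := Real.log_pos ht
      have h3 := D_nonneg hα h1
      have h4 : (0:ℝ) ≤ t ^ (1-α) := (Real.rpow_pos_of_pos h1 _).le
      positivity
    · filter_upwards [eventually_gt_atTop (1:ℝ)] with t ht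
      have h1 : (0:ℝ) < t := by linarith
      have h2 : 0 < Real.log t := Real.log_pos ht
      have h2' : 0 < Real.log t := h2
      gcongr
      have h3 := D_le hα h1
      have h4 : (0:ℝ) < t ^ (1-α) := Real.rpow_pos_of_pos h1 _
      have h5 : t ^ (1-α) * (t ^ (α-1) / α) = 1/α := by
        rw [← mul_div_assoc, ← Real.rpow_add h1]
        norm_num
      calc t ^ (1-α) * (∫ s in (0:ℝ)..t, (1+s)⁻¹ * ((t - s) ^ (α - 1) - t ^ (α - 1)))
          ≤ t ^ (1-α) * (t ^ (α-1) / α) := by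
            exact mul_le_mul_of_nonneg_left h3 h4.le
        _ = 1/α := h5
  have key : Tendsto (fun t => t ^ (1-α) *
      (∫ s in (0:ℝ)..t, (1+s)⁻¹ * ((t - s) ^ (α - 1) - t ^ (α - 1))) / Real.log t
      + Real.log (1+t) / Real.log t) atTop (nhds 1) := by
    simpa using hD.add log_ratio
  apply key.congr'
  filter_upwards [eventually_gt_atTop (1:ℝ)] with t ht
  have h1 : (0:ℝ) < t := by linarith
  rw [L_split hα.1 h1]
  have hone : t ^ (1-α) * t ^ (α-1) = 1 := by
    rw [← Real.rpow_add h1]; norm_num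
  rw [mul_add, add_div, ← mul_assoc, hone, one_mul]

lemma hC_nonneg {h : ℝ → ℝ} {C : ℝ}
    (hbound : ∀ s > (0:ℝ), |h s| ≤ C * (1 + s) ^ (-(1:ℝ))) : 0 ≤ C := by
  have h1 := hbound 1 one_pos
  have h2 : (0:ℝ) < (1 + 1) ^ (-(1:ℝ)) := Real.rpow_pos_of_pos (by norm_num) _
  nlinarith [abs_nonneg (h 1)]

lemma hb' {h : ℝ → ℝ} {C : ℝ}
    (hbound : ∀ s > (0:ℝ), |h s| ≤ C * (1 + s) ^ (-(1:ℝ))) :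
    ∀ s > (0:ℝ), |h s| ≤ C := by
  intro s hs
  have h1 := hbound s hs
  rw [Real.rpow_neg_one] at h1
  have h2 : (1 + s)⁻¹ ≤ 1 := by rw [inv_le_one_iff₀]; right; linarith
  have h3 : (0:ℝ) < (1+s)⁻¹ := inv_pos.mpr (by linarith)
  nlinarith [hC_nonneg hbound]

lemma diff_ker_int {α : ℝ} (hα : 0 < α) {t : ℝ} (ht : 0 < t)
    {h : ℝ → ℝ} (hmeas : Measurable h) {M₀ C : ℝ}
    (hbound : ∀ s > (0:ℝ), |h s| ≤ C * (1 + s) ^ (-(1:ℝ))) :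
    IntervalIntegrable (fun s => (h s - M₀ * (1+s)⁻¹) * (t - s) ^ (α - 1)) volume 0 t := by
  refine mul_ker_int hα ht _ (by fun_prop) (B := C + |M₀|) fun s hs => ?_
  have h1 := hb' hbound s hs.1
  have h2 : (1 + s)⁻¹ ≤ 1 := by rw [inv_le_one_iff₀]; right; linarith [hs.1]
  have h3 : (0:ℝ) < (1+s)⁻¹ := inv_pos.mpr (by linarith [hs.1])
  calc |h s - M₀ * (1+s)⁻¹| ≤ |h s| + |M₀ * (1+s)⁻¹| := abs_sub _ _
    _ ≤ C + |M₀| := by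
        rw [abs_mul, abs_of_pos h3]
        refine add_le_add h1 ?_
        nlinarith [abs_nonneg M₀]

lemma K_eq {α : ℝ} (hα : 0 < α) {t : ℝ} (ht : 0 < t)
    {h : ℝ → ℝ} (hmeas : Measurable h) {M₀ C : ℝ}
    (hbound : ∀ s > (0:ℝ), |h s| ≤ C * (1 + s) ^ (-(1:ℝ))) :
    (∫ s in (0:ℝ)..t, h s * (t - s) ^ (α - 1)) =
      (∫ s in (0:ℝ)..t, (h s - M₀ * (1+s)⁻¹) * (t - s) ^ (α - 1))
        + M₀ * ∫ s in (0:ℝ)..t, (1+s)⁻¹ * (t - s) ^ (α - 1) := by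
  have hK : IntervalIntegrable (fun s => h s * (t - s) ^ (α - 1)) volume 0 t :=
    mul_ker_int hα ht _ hmeas (B := C) fun s hs => hb' hbound s hs.1
  have hL2 : IntervalIntegrable (fun s => M₀ * ((1+s)⁻¹ * (t - s) ^ (α - 1))) volume 0 t :=
    (inv_ker_int hα ht).const_mul M₀
  have key : (∫ s in (0:ℝ)..t, (h s * (t - s) ^ (α - 1)
        - M₀ * ((1+s)⁻¹ * (t - s) ^ (α - 1))))
      = (∫ s in (0:ℝ)..t, h s * (t - s) ^ (α - 1))
        - ∫ s in (0:ℝ)..t, M₀ * ((1+s)⁻¹ * (t - s) ^ (α - 1)) :=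
    intervalIntegral.integral_sub hK hL2
  have e1 : (∫ s in (0:ℝ)..t, (h s - M₀ * (1+s)⁻¹) * (t - s) ^ (α - 1))
      = ∫ s in (0:ℝ)..t, (h s * (t - s) ^ (α - 1)
        - M₀ * ((1+s)⁻¹ * (t - s) ^ (α - 1))) := by
    congr 1; funext s; ring
  rw [e1, key, intervalIntegral.integral_const_mul]; ring

lemma diff_bd {h : ℝ → ℝ} {M₀ C : ℝ}
    (hbound : ∀ s > (0:ℝ), |h s| ≤ C * (1 + s) ^ (-(1:ℝ))) :
    ∀ s > (0:ℝ), |h s - M₀ * (1+s)⁻¹| ≤ C + |M₀| := by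
  intro s hs
  have h1 := hb' hbound s hs
  have h2 : (1 + s)⁻¹ ≤ 1 := by rw [inv_le_one_iff₀]; right; linarith
  have h3 : (0:ℝ) < (1+s)⁻¹ := inv_pos.mpr (by linarith)
  calc |h s - M₀ * (1+s)⁻¹| ≤ |h s| + |M₀ * (1+s)⁻¹| := abs_sub _ _
    _ ≤ C + |M₀| := by
        rw [abs_mul, abs_of_pos h3]
        refine add_le_add h1 ?_
        nlinarith [abs_nonneg M₀]

lemma R_lim {α : ℝ} (hα : α ∈ Set.Ioo (0:ℝ) 1)
    {h : ℝ → ℝ} (hmeas : Measurable h) {M₀ C : ℝ}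
    (hbound : ∀ s > (0:ℝ), |h s| ≤ C * (1 + s) ^ (-(1:ℝ)))
    (hlim : Tendsto (fun s : ℝ => h s * (1 + s)) atTop (nhds M₀)) :
    Tendsto (fun t => t ^ (1-α) *
        (∫ s in (0:ℝ)..t, (h s - M₀ * (1+s)⁻¹) * (t - s) ^ (α - 1)) / Real.log t)
      atTop (nhds 0) := by
  rw [NormedAddCommGroup.tendsto_nhds_zero]
  intro ε hε
  obtain ⟨A0, hA0⟩ := Metric.tendsto_atTop.1 hlim (ε/4) (by linarith)
  set A := max A0 1 with hAdef
  have hA1 : (1:ℝ) ≤ A := le_max_right _ _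
  have hA0le : A0 ≤ A := le_max_left _ _
  have hCM : (0:ℝ) ≤ C + |M₀| := add_nonneg (hC_nonneg hbound) (abs_nonneg _)
  have ev1 : ∀ᶠ t : ℝ in atTop, 2*(C+|M₀|)*A / Real.log t < ε/2 := by
    have hz : Tendsto (fun t : ℝ => 2*(C+|M₀|)*A / Real.log t) atTop (nhds 0) :=
      Tendsto.div_atTop tendsto_const_nhds Real.tendsto_log_atTop
    exact hz.eventually_lt_const (by linarith)
  have ev2 : ∀ᶠ t : ℝ in atTop,
      t ^ (1-α) * (∫ s in (0:ℝ)..t, (1+s)⁻¹ * (t - s) ^ (α - 1)) / Real.log t < 2 :=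
    (A_lim hα).eventually_lt_const (by norm_num)
  filter_upwards [ev1, ev2, eventually_ge_atTop (2*A), eventually_gt_atTop (1:ℝ)]
    with t hev1 hev2 ht2A ht1
  have htpos : (0:ℝ) < t := by linarith
  have hAt : A < t := by linarith
  have hlt : 0 < Real.log t := Real.log_pos ht1
  have htA : 0 < t - A := by linarith
  have hint : IntervalIntegrable (fun s => (h s - M₀ * (1+s)⁻¹) * (t - s) ^ (α - 1))
      volume 0 t := diff_ker_int hα.1 htpos hmeas hbound
  have hsub1 : IntervalIntegrable (fun s => (h s - M₀ * (1+s)⁻¹) * (t - s) ^ (α - 1))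
      volume 0 A := hint.mono_set (by
    rw [Set.uIcc_of_le (by linarith : (0:ℝ) ≤ A), Set.uIcc_of_le htpos.le]
    exact Set.Icc_subset_Icc le_rfl hAt.le)
  have hsub2 : IntervalIntegrable (fun s => (h s - M₀ * (1+s)⁻¹) * (t - s) ^ (α - 1))
      volume A t := hint.mono_set (by
    rw [Set.uIcc_of_le hAt.le, Set.uIcc_of_le htpos.le]
    exact Set.Icc_subset_Icc (by linarith) le_rfl)
  have hLsub2 : IntervalIntegrable (fun s => (1+s)⁻¹ * (t - s) ^ (α - 1)) volume A t :=
    (inv_ker_int hα.1 htpos).mono_set (by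
      rw [Set.uIcc_of_le hAt.le, Set.uIcc_of_le htpos.le]
      exact Set.Icc_subset_Icc (by linarith) le_rfl)
  have hLsub1 : IntervalIntegrable (fun s => (1+s)⁻¹ * (t - s) ^ (α - 1)) volume 0 A :=
    (inv_ker_int hα.1 htpos).mono_set (by
      rw [Set.uIcc_of_le (by linarith : (0:ℝ) ≤ A), Set.uIcc_of_le htpos.le]
      exact Set.Icc_subset_Icc le_rfl hAt.le)
  have hsplit := intervalIntegral.integral_add_adjacent_intervals hsub1 hsub2
  -- piece 1
  have hP1 : ‖∫ s in (0:ℝ)..A, (h s - M₀ * (1+s)⁻¹) * (t - s) ^ (α - 1)‖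
      ≤ (C+|M₀|) * (t-A) ^ (α-1) * |A - 0| := by
    apply intervalIntegral.norm_integral_le_of_norm_le_const
    intro x hx
    rw [Set.uIoc_of_le (by linarith : (0:ℝ) ≤ A)] at hx
    have htx : 0 < t - x := by linarith [hx.2]
    have hk1 : (t-x) ^ (α-1) ≤ (t-A) ^ (α-1) :=
      Real.rpow_le_rpow_of_nonpos htA (by linarith [hx.2]) (by linarith [hα.2])
    have hknn : (0:ℝ) ≤ (t-x) ^ (α-1) := (Real.rpow_pos_of_pos htx _).le
    calc ‖(h x - M₀ * (1+x)⁻¹) * (t - x) ^ (α - 1)‖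
        = |h x - M₀ * (1+x)⁻¹| * (t-x) ^ (α-1) := by
          rw [norm_mul, Real.norm_eq_abs, Real.norm_eq_abs, abs_of_nonneg hknn]
      _ ≤ (C+|M₀|) * (t-A) ^ (α-1) :=
          mul_le_mul (diff_bd hbound x hx.1) hk1 hknn hCM
  -- piece 2
  have hP2 : ‖∫ s in A..t, (h s - M₀ * (1+s)⁻¹) * (t - s) ^ (α - 1)‖
      ≤ (ε/4) * ∫ s in (0:ℝ)..t, (1+s)⁻¹ * (t - s) ^ (α - 1) := by
    have ptwise : ∀ s ∈ Set.Icc A t, ‖(h s - M₀ * (1+s)⁻¹) * (t - s) ^ (α - 1)‖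
        ≤ (ε/4) * ((1+s)⁻¹ * (t - s) ^ (α - 1)) := by
      intro s hs
      have hs0 : (0:ℝ) < s := by linarith [hs.1]
      have h1s : (0:ℝ) < 1 + s := by linarith
      have hknn : (0:ℝ) ≤ (t-s) ^ (α-1) := Real.rpow_nonneg (by linarith [hs.2]) _
      have hdist := hA0 s (by linarith [hs.1])
      rw [Real.dist_eq] at hdist
      have heq : h s - M₀ * (1+s)⁻¹ = (h s * (1+s) - M₀) * (1+s)⁻¹ := by
        field_simp
      rw [norm_mul, Real.norm_eq_abs, Real.norm_eq_abs, abs_of_nonneg hknn, heq,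
        abs_mul, abs_of_pos (inv_pos.mpr h1s)]
      have : |h s * (1+s) - M₀| * (1+s)⁻¹ ≤ (ε/4) * (1+s)⁻¹ := by
        apply mul_le_mul_of_nonneg_right hdist.le (by positivity)
      calc |h s * (1+s) - M₀| * (1+s)⁻¹ * (t-s) ^ (α-1)
          ≤ (ε/4) * (1+s)⁻¹ * (t-s) ^ (α-1) := mul_le_mul_of_nonneg_right this hknn
        _ = (ε/4) * ((1+s)⁻¹ * (t-s) ^ (α-1)) := by ring
    have hLnn1 : (0:ℝ) ≤ ∫ s in (0:ℝ)..A, (1+s)⁻¹ * (t - s) ^ (α - 1) := by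
      apply intervalIntegral.integral_nonneg (by linarith : (0:ℝ) ≤ A)
      intro s hs
      have h1s : (0:ℝ) < 1 + s := by linarith [hs.1]
      have : (0:ℝ) ≤ (t-s) ^ (α-1) := Real.rpow_nonneg (by linarith [hs.2]) _
      positivity
    have hLsplit := intervalIntegral.integral_add_adjacent_intervals hLsub1 hLsub2
    calc ‖∫ s in A..t, (h s - M₀ * (1+s)⁻¹) * (t - s) ^ (α - 1)‖
        ≤ ∫ s in A..t, ‖(h s - M₀ * (1+s)⁻¹) * (t - s) ^ (α - 1)‖ :=
          intervalIntegral.norm_integral_le_integral_norm hAt.le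
      _ ≤ ∫ s in A..t, (ε/4) * ((1+s)⁻¹ * (t - s) ^ (α - 1)) :=
          intervalIntegral.integral_mono_on hAt.le hsub2.norm (hLsub2.const_mul _) ptwise
      _ = (ε/4) * ∫ s in A..t, (1+s)⁻¹ * (t - s) ^ (α - 1) :=
          intervalIntegral.integral_const_mul _ _
      _ ≤ (ε/4) * ∫ s in (0:ℝ)..t, (1+s)⁻¹ * (t - s) ^ (α - 1) := by
          rw [← hLsplit]
          have : (0:ℝ) ≤ ε/4 := by linarith
          nlinarith [hLnn1]
  -- combine
  have hE : ‖∫ s in (0:ℝ)..t, (h s - M₀ * (1+s)⁻¹) * (t - s) ^ (α - 1)‖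
      ≤ (C+|M₀|) * (t-A) ^ (α-1) * A
        + (ε/4) * ∫ s in (0:ℝ)..t, (1+s)⁻¹ * (t - s) ^ (α - 1) := by
    rw [← hsplit]
    refine (norm_add_le _ _).trans (add_le_add (hP1.trans (le_of_eq ?_)) hP2)
    rw [sub_zero, abs_of_nonneg (by linarith : (0:ℝ) ≤ A)]
  -- kernel factor bound
  have hPk1 : t ^ (1-α) * (t-A) ^ (α-1) ≤ 2 := by
    have h1 : (t-A) ^ (α-1) ≤ (t/2) ^ (α-1) :=
      Real.rpow_le_rpow_of_nonpos (by linarith) (by linarith) (by linarith [hα.2])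
    have he : t ^ (1-α) * t ^ (α-1) = 1 := by
      rw [← Real.rpow_add htpos]; norm_num
    have h2 : t ^ (1-α) * (t/2) ^ (α-1) = (2:ℝ) ^ (1-α) := by
      have e2 : ((2:ℝ)) ^ (1-α) = ((2:ℝ) ^ (α-1))⁻¹ := by
        rw [← Real.rpow_neg (by norm_num : (0:ℝ) ≤ 2)]
        congr 1; ring
      calc t ^ (1-α) * (t/2) ^ (α-1)
          = t ^ (1-α) * (t ^ (α-1) / (2:ℝ) ^ (α-1)) := by
            rw [Real.div_rpow htpos.le (by norm_num : (0:ℝ) ≤ 2)]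
        _ = (t ^ (1-α) * t ^ (α-1)) / (2:ℝ) ^ (α-1) := by ring
        _ = ((2:ℝ) ^ (α-1))⁻¹ := by rw [he, one_div]
        _ = (2:ℝ) ^ (1-α) := e2.symm
    have h3 : (2:ℝ) ^ (1-α) ≤ 2 := by
      calc (2:ℝ) ^ (1-α) ≤ (2:ℝ) ^ (1:ℝ) :=
            Real.rpow_le_rpow_of_exponent_le one_le_two (by linarith [hα.1])
        _ = 2 := Real.rpow_one 2
    have h4 : (0:ℝ) ≤ t ^ (1-α) := (Real.rpow_pos_of_pos htpos _).le
    calc t ^ (1-α) * (t-A) ^ (α-1) ≤ t ^ (1-α) * (t/2) ^ (α-1) :=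
          mul_le_mul_of_nonneg_left h1 h4
      _ = (2:ℝ) ^ (1-α) := h2
      _ ≤ 2 := h3
  -- final estimate
  rw [Real.norm_eq_abs] at hE ⊢
  have hPpos : (0:ℝ) < t ^ (1-α) := Real.rpow_pos_of_pos htpos _
  rw [abs_div, abs_mul, abs_of_pos hPpos, abs_of_pos hlt]
  have step1 : t ^ (1-α) * |∫ s in (0:ℝ)..t, (h s - M₀ * (1+s)⁻¹) * (t - s) ^ (α - 1)|
        / Real.log t
      ≤ t ^ (1-α) * ((C+|M₀|) * (t-A) ^ (α-1) * A
          + (ε/4) * ∫ s in (0:ℝ)..t, (1+s)⁻¹ * (t - s) ^ (α - 1)) / Real.log t := by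
    gcongr
  have step2 : t ^ (1-α) * ((C+|M₀|) * (t-A) ^ (α-1) * A
          + (ε/4) * ∫ s in (0:ℝ)..t, (1+s)⁻¹ * (t - s) ^ (α - 1)) / Real.log t
      = (C+|M₀|) * A * (t ^ (1-α) * (t-A) ^ (α-1)) / Real.log t
        + (ε/4) * (t ^ (1-α) * (∫ s in (0:ℝ)..t, (1+s)⁻¹ * (t - s) ^ (α - 1))
          / Real.log t) := by ring
  have hCMA : (0:ℝ) ≤ (C+|M₀|) * A := mul_nonneg hCM (by linarith)
  have f1 : (C+|M₀|) * A * (t ^ (1-α) * (t-A) ^ (α-1)) / Real.log t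
      ≤ (C+|M₀|) * A * 2 / Real.log t := by gcongr
  have f1' : (C+|M₀|) * A * 2 / Real.log t = 2*(C+|M₀|)*A / Real.log t := by ring
  have f2 : (ε/4) * (t ^ (1-α) * (∫ s in (0:ℝ)..t, (1+s)⁻¹ * (t - s) ^ (α - 1))
        / Real.log t) ≤ (ε/4) * 2 :=
    mul_le_mul_of_nonneg_left hev2.le (by linarith)
  linarith [step1, step2.le, step2.ge, f1, f2, hev1, f1'.le, f1'.ge]

theorem stmt8 (α : ℝ) (hα : α ∈ Set.Ioo (0:ℝ) 1)
    (h : ℝ → ℝ) (hmeas : Measurable h) (M₀ C : ℝ)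
    (hbound : ∀ s > (0:ℝ), |h s| ≤ C * (1 + s) ^ (-(1:ℝ)))
    (hlim : Tendsto (fun s : ℝ => h s * (1 + s)) atTop (nhds M₀)) :
    Tendsto (fun t : ℝ =>
        t ^ (1 - α) * (∫ s in (0:ℝ)..t, h s * (t - s) ^ (α - 1)) / Real.log t)
      atTop (nhds M₀) := by
  have key := (R_lim hα hmeas hbound hlim).add ((A_lim hα).const_mul M₀)
  rw [zero_add, mul_one] at key
  apply key.congr'
  filter_upwards [eventually_gt_atTop (0:ℝ)] with t ht
  rw [K_eq hα.1 ht hmeas hbound]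
  ring
end

section
/- Let α ∈ (0,1) and define, for a measurable h : (0,∞) → ℝ with |h(s)| ≤ C(1+s)^{−γ} and γ > 1, M(t) = ∫_0^t h(s)(t−s)^{α−1} ds and M_∞ = ∫_0^∞ h(s) ds. Then for any δ ∈ (0,1/2): |t^{1−α}M(t) − M_∞| ≤ t^{1−α}∫_0^{δt}|h(s)|((t−s)^{α−1} − t^{α−1})ds + t^{1−α}∫_{δt}^t |h(s)|(t−s)^{α−1} ds + ∫_{δt}^∞ |h(s)| ds, and each term can be made smaller than ε for suitable δ and all large t; in particular each of the three bounds holds: the first is ≤ C'δ, the second is ≤ C' t^{1−γ}, the third tends to 0 as t → ∞. -/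
open MeasureTheory Real Set Filter intervalIntegral

/-!
Split `∫₀ᵗ` at `δt` and `∫_{(0,∞)}` at `δt`. On `[0, δt]` the rescaled kernel
`t^{1-α}(t-s)^{α-1}` lies between `1` and `(1-δ)^{α-1}`; on `[δt, t]` the decay bound gives
`|h| ≤ C (δt)^{-γ}` while `∫_{δt}^t (t-s)^{α-1} ds = ((1-δ)t)^α/α`, which yields `t^{1-γ}`; the
remaining tail `∫_{δt}^∞ |h|` vanishes because `h` is integrable for `γ > 1`.
-/

theorem integrableOn_Ioi_of_abs_le_one_add_rpow_neg {f : ℝ → ℝ} {C γ : ℝ} (hγ : 1 < γ)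
    (hf : AEStronglyMeasurable f) (hbound : ∀ s ≥ (0:ℝ), |f s| ≤ C * (1 + s) ^ (-γ)) :
    IntegrableOn f (Ioi 0) := by
  have hdom : Integrable (fun s : ℝ ↦ C * (1 + ‖s‖) ^ (-γ)) :=
    (integrable_one_add_norm (by simpa using hγ)).const_mul C
  refine hdom.integrableOn.mono' hf.restrict ?_
  filter_upwards [ae_restrict_mem measurableSet_Ioi] with s hs
  simpa [abs_of_pos (show (0:ℝ) < s from hs)] using hbound s (le_of_lt hs)

theorem abs_le_of_abs_le_mul_one_add_rpow_neg {f : ℝ → ℝ} {C γ : ℝ} (hγ : 0 ≤ γ)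
    (hbound : ∀ s ≥ (0:ℝ), |f s| ≤ C * (1 + s) ^ (-γ)) {s : ℝ} (hs : 0 ≤ s) : |f s| ≤ C := by
  have hC : 0 ≤ C := by simpa using (abs_nonneg _).trans (hbound 0 le_rfl)
  exact (hbound s hs).trans (mul_le_of_le_one_right hC
    (rpow_le_one_of_one_le_of_nonpos (by linarith) (neg_nonpos.2 hγ)))

theorem rpow_one_sub_mul_rpow_sub_one (α : ℝ) {t : ℝ} (ht : 0 < t) :
    t ^ (1 - α) * t ^ (α - 1) = 1 := by
  rw [← rpow_add ht, sub_add_sub_cancel, sub_self, rpow_zero]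

theorem intervalIntegrable_sub_rpow {a b β : ℝ} (hβ : -1 < β) :
    IntervalIntegrable (fun s ↦ (b - s) ^ β) volume a b := by
  simpa using ((intervalIntegrable_rpow' hβ (a := 0) (b := b - a)).comp_sub_left b).symm

theorem integral_sub_rpow {a b β : ℝ} (hβ : -1 < β) :
    ∫ s in a..b, (b - s) ^ β = (b - a) ^ (β + 1) / (β + 1) := by
  rw [intervalIntegral.integral_comp_sub_left (fun x ↦ x ^ β), integral_rpow (Or.inl hβ),
    sub_self, zero_rpow (by linarith), sub_zero]

theorem intervalIntegrable_mul_sub_rpow {f : ℝ → ℝ} {a b β M : ℝ} (hβ : -1 < β) (hab : a ≤ b)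
    (hf : AEStronglyMeasurable f) (hM : ∀ s ∈ Ioc a b, |f s| ≤ M) :
    IntervalIntegrable (fun s ↦ f s * (b - s) ^ β) volume a b := by
  refine (intervalIntegrable_iff_integrableOn_Ioc_of_le hab).2 ?_
  refine (intervalIntegrable_sub_rpow hβ).1.bdd_mul (c := M) hf.restrict ?_
  filter_upwards [ae_restrict_mem measurableSet_Ioc] with s hs
  exact hM s hs

theorem integral_abs_mul_sub_rpow_le {f : ℝ → ℝ} {a t α M : ℝ} (hα : 0 < α) (hat : a ≤ t)
    (hf : AEStronglyMeasurable f) (hM : ∀ s ∈ Icc a t, |f s| ≤ M) :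
    ∫ s in a..t, |f s| * (t - s) ^ (α - 1) ≤ M * ((t - a) ^ α / α) := by
  have hβ : -1 < α - 1 := by linarith
  calc ∫ s in a..t, |f s| * (t - s) ^ (α - 1)
      ≤ ∫ s in a..t, M * (t - s) ^ (α - 1) := by
        have hf_abs : AEStronglyMeasurable fun s ↦ |f s| :=
          continuous_abs.comp_aestronglyMeasurable hf
        refine integral_mono_on hat
          (intervalIntegrable_mul_sub_rpow (M := M) hβ hat hf_abs fun s hs ↦ ?_)
          ((intervalIntegrable_sub_rpow hβ).const_mul M) fun s hs ↦ ?_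
        · simpa using hM s (Ioc_subset_Icc_self hs)
        · exact mul_le_mul_of_nonneg_right (hM s hs) (rpow_nonneg (by linarith [hs.2]) _)
    _ = M * ((t - a) ^ α / α) := by
        rw [intervalIntegral.integral_const_mul, integral_sub_rpow hβ, sub_add_cancel]

theorem abs_integral_rpow_mul_sub_le {f : ℝ → ℝ} {α a t : ℝ} (hα : α ≤ 1) (ha : 0 ≤ a)
    (hat : a < t) :
    |∫ s in (0:ℝ)..a, (t ^ (1 - α) * (f s * (t - s) ^ (α - 1)) - f s)| ≤
      t ^ (1 - α) * ∫ s in (0:ℝ)..a, |f s| * ((t - s) ^ (α - 1) - t ^ (α - 1)) := by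
  have ht : 0 < t := ha.trans_lt hat
  refine (abs_integral_le_integral_abs ha).trans_eq ?_
  rw [← intervalIntegral.integral_const_mul]
  refine integral_congr fun s hs ↦ ?_
  rw [uIcc_of_le ha] at hs
  have hker : t ^ (α - 1) ≤ (t - s) ^ (α - 1) :=
    rpow_le_rpow_of_nonpos (by linarith [hs.2]) (by linarith [hs.1]) (by linarith)
  have hinv := rpow_one_sub_mul_rpow_sub_one α ht
  have hpos : 0 ≤ t ^ (1 - α) * ((t - s) ^ (α - 1) - t ^ (α - 1)) :=
    mul_nonneg (rpow_nonneg ht.le _) (sub_nonneg.2 hker)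
  calc |t ^ (1 - α) * (f s * (t - s) ^ (α - 1)) - f s|
      = |f s * (t ^ (1 - α) * ((t - s) ^ (α - 1) - t ^ (α - 1)))| := by
        rw [mul_sub (t ^ (1 - α)), hinv]; ring_nf
    _ = t ^ (1 - α) * (|f s| * ((t - s) ^ (α - 1) - t ^ (α - 1))) := by
        rw [abs_mul, abs_of_nonneg hpos]; ring

theorem abs_rpow_mul_integral_sub_integral_le {f : ℝ → ℝ} {α a t : ℝ} (hα : α ≤ 1)
    (ha : 0 ≤ a) (hat : a < t) (hf : IntegrableOn f (Ioi 0))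
    (hk : IntervalIntegrable (fun s ↦ f s * (t - s) ^ (α - 1)) volume 0 t) :
    |t ^ (1 - α) * (∫ s in (0:ℝ)..t, f s * (t - s) ^ (α - 1)) - ∫ s in Ioi (0:ℝ), f s| ≤
      t ^ (1 - α) * (∫ s in (0:ℝ)..a, |f s| * ((t - s) ^ (α - 1) - t ^ (α - 1))) +
      t ^ (1 - α) * (∫ s in a..t, |f s| * (t - s) ^ (α - 1)) +
      ∫ s in Ioi a, |f s| := by
  have hk₁ : IntervalIntegrable (fun s ↦ f s * (t - s) ^ (α - 1)) volume 0 a :=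
    hk.mono_set (uIcc_subset_uIcc left_mem_uIcc (Icc_subset_uIcc ⟨ha, hat.le⟩))
  have hk₂ : IntervalIntegrable (fun s ↦ f s * (t - s) ^ (α - 1)) volume a t :=
    hk.mono_set (uIcc_subset_uIcc (Icc_subset_uIcc ⟨ha, hat.le⟩) right_mem_uIcc)
  have hf₁ : IntervalIntegrable f volume 0 a :=
    (intervalIntegrable_iff_integrableOn_Ioc_of_le ha).2 (hf.mono_set Ioc_subset_Ioi_self)
  have hsplit : t ^ (1 - α) * (∫ s in (0:ℝ)..t, f s * (t - s) ^ (α - 1)) -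
      ∫ s in Ioi (0:ℝ), f s =
      (∫ s in (0:ℝ)..a, (t ^ (1 - α) * (f s * (t - s) ^ (α - 1)) - f s)) +
      t ^ (1 - α) * (∫ s in a..t, f s * (t - s) ^ (α - 1)) - ∫ s in Ioi a, f s := by
    rw [← integral_add_adjacent_intervals hk₁ hk₂,
      ← integral_interval_add_Ioi hf (hf.mono_set (Ioi_subset_Ioi ha)),
      integral_sub (hk₁.const_mul _) hf₁, intervalIntegral.integral_const_mul]
    ring
  have hnear : |t ^ (1 - α) * ∫ s in a..t, f s * (t - s) ^ (α - 1)| ≤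
      t ^ (1 - α) * ∫ s in a..t, |f s| * (t - s) ^ (α - 1) := by
    rw [abs_mul, abs_of_nonneg (rpow_nonneg (ha.trans hat.le) _)]
    refine mul_le_mul_of_nonneg_left ((abs_integral_le_integral_abs hat.le).trans_eq ?_)
      (rpow_nonneg (ha.trans hat.le) _)
    refine integral_congr fun s hs ↦ ?_
    rw [uIcc_of_le hat.le] at hs
    simp only [abs_mul, abs_of_nonneg (rpow_nonneg (sub_nonneg.2 hs.2) _)]
  rw [hsplit]
  refine (abs_sub _ _).trans (add_le_add ((abs_add_le _ _).trans (add_le_add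
    (abs_integral_rpow_mul_sub_le hα ha hat) hnear)) ?_)
  exact abs_integral_le_integral_abs

theorem rpow_mul_integral_abs_mul_sub_rpow_sub_le {f : ℝ → ℝ} {α δ t : ℝ} (hα : α ≤ 1) (hδ₀ : 0 ≤ δ)
    (hδ₁ : δ < 1) (ht : 0 < t) (hf : IntervalIntegrable f volume 0 (δ * t)) :
    t ^ (1 - α) * (∫ s in (0:ℝ)..δ * t, |f s| * ((t - s) ^ (α - 1) - t ^ (α - 1))) ≤
      ((1 - δ) ^ (α - 1) - 1) * ∫ s in (0:ℝ)..δ * t, |f s| := by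
  have hδt : 0 ≤ δ * t := mul_nonneg hδ₀ ht.le
  have hgap : ∀ s ∈ Icc 0 (δ * t), (1 - δ) * t ≤ t - s := fun s hs ↦ by linarith [hs.2]
  have hgap_pos : 0 < (1 - δ) * t := mul_pos (by linarith) ht
  have hcont : ContinuousOn (fun s ↦ (t - s) ^ (α - 1) - t ^ (α - 1)) (uIcc 0 (δ * t)) := by
    rw [uIcc_of_le hδt]
    refine ((continuousOn_const.sub continuousOn_id).rpow_const fun s hs ↦ ?_).sub
      continuousOn_const
    exact Or.inl (hgap_pos.trans_le (hgap s hs)).ne'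
  have hinv := rpow_one_sub_mul_rpow_sub_one α ht
  calc t ^ (1 - α) * (∫ s in (0:ℝ)..δ * t, |f s| * ((t - s) ^ (α - 1) - t ^ (α - 1)))
      ≤ t ^ (1 - α) * ∫ s in (0:ℝ)..δ * t, |f s| * (((1 - δ) ^ (α - 1) - 1) * t ^ (α - 1)) := by
        refine mul_le_mul_of_nonneg_left (integral_mono_on hδt (hf.abs.mul_continuousOn hcont)
          (hf.abs.mul_const _) fun s hs ↦ ?_) (rpow_nonneg ht.le _)
        have hker : (t - s) ^ (α - 1) ≤ ((1 - δ) * t) ^ (α - 1) :=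
          rpow_le_rpow_of_nonpos hgap_pos (hgap s hs) (by linarith)
        rw [mul_rpow (by linarith) ht.le] at hker
        exact mul_le_mul_of_nonneg_left (by linarith) (abs_nonneg _)
    _ = ((1 - δ) ^ (α - 1) - 1) * ∫ s in (0:ℝ)..δ * t, |f s| := by
        rw [intervalIntegral.integral_mul_const]
        linear_combination (((1 - δ) ^ (α - 1) - 1) * ∫ s in (0:ℝ)..δ * t, |f s|) * hinv

theorem rpow_mul_integral_abs_mul_sub_rpow_le {f : ℝ → ℝ} {α γ C δ t : ℝ} (hα : 0 < α)
    (hγ : 0 ≤ γ) (hδ₀ : 0 < δ) (hδ₁ : δ ≤ 1) (ht : 0 < t) (hf : AEStronglyMeasurable f)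
    (hbound : ∀ s ≥ (0:ℝ), |f s| ≤ C * (1 + s) ^ (-γ)) :
    t ^ (1 - α) * (∫ s in δ * t..t, |f s| * (t - s) ^ (α - 1)) ≤
      C * δ ^ (-γ) * (1 - δ) ^ α / α * t ^ (1 - γ) := by
  have hC : 0 ≤ C :=
    (abs_nonneg _).trans (abs_le_of_abs_le_mul_one_add_rpow_neg hγ hbound le_rfl)
  have hδt : 0 < δ * t := mul_pos hδ₀ ht
  have hM : ∀ s ∈ Icc (δ * t) t, |f s| ≤ C * (δ * t) ^ (-γ) := fun s hs ↦
    (hbound s (hδt.le.trans hs.1)).trans (mul_le_mul_of_nonneg_left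
      (rpow_le_rpow_of_nonpos hδt (by linarith [hs.1]) (neg_nonpos.2 hγ)) hC)
  have hδt_le : δ * t ≤ t := mul_le_of_le_one_left ht.le hδ₁
  calc t ^ (1 - α) * (∫ s in δ * t..t, |f s| * (t - s) ^ (α - 1))
      ≤ t ^ (1 - α) * (C * (δ * t) ^ (-γ) * ((t - δ * t) ^ α / α)) :=
        mul_le_mul_of_nonneg_left (integral_abs_mul_sub_rpow_le hα hδt_le hf hM)
          (rpow_nonneg ht.le _)
    _ = C * δ ^ (-γ) * (1 - δ) ^ α / α * (t ^ (1 - α) * t ^ (-γ) * t ^ α) := by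
        rw [show t - δ * t = (1 - δ) * t by ring, mul_rpow hδ₀.le ht.le,
          mul_rpow (by linarith) ht.le]
        ring
    _ = C * δ ^ (-γ) * (1 - δ) ^ α / α * t ^ (1 - γ) := by
        rw [← rpow_add ht, ← rpow_add ht]
        ring_nf

theorem stmt19_general (α γ C : ℝ) (hα : α ∈ Set.Ioo (0:ℝ) 1) (hγ : 1 < γ)
    (h : ℝ → ℝ) (hmeas : Measurable h)
    (hbound : ∀ s ≥ (0:ℝ), |h s| ≤ C * (1 + s) ^ (-γ)) :
    ∀ δ ∈ Set.Ioo (0:ℝ) (1/2),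
      (∀ t > (0:ℝ),
        |t ^ (1 - α) * (∫ s in (0:ℝ)..t, h s * (t - s) ^ (α - 1)) -
            ∫ s in Set.Ioi (0:ℝ), h s| ≤
          t ^ (1 - α) * (∫ s in (0:ℝ)..δ * t, |h s| * ((t - s) ^ (α - 1) - t ^ (α - 1))) +
          t ^ (1 - α) * (∫ s in δ * t..t, |h s| * (t - s) ^ (α - 1)) +
          ∫ s in Set.Ioi (δ * t), |h s|) ∧
      (∃ C' > (0:ℝ),
        (∀ t ≥ (2:ℝ),
          t ^ (1 - α) * (∫ s in (0:ℝ)..δ * t, |h s| * ((t - s) ^ (α - 1) - t ^ (α - 1))) ≤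
            C' * δ) ∧
        (∀ t ≥ (2:ℝ),
          t ^ (1 - α) * (∫ s in δ * t..t, |h s| * (t - s) ^ (α - 1)) ≤
            C' * t ^ (1 - γ))) ∧
      Tendsto (fun t : ℝ => ∫ s in Set.Ioi (δ * t), |h s|) atTop (nhds 0) := by
  rintro δ ⟨hδ₀, hδ₁⟩
  have hδ₁' : δ < 1 := by linarith
  have hint : IntegrableOn h (Ioi 0) :=
    integrableOn_Ioi_of_abs_le_one_add_rpow_neg hγ hmeas.aestronglyMeasurable hbound
  have hker (t : ℝ) (ht : 0 < t) :
      IntervalIntegrable (fun s ↦ h s * (t - s) ^ (α - 1)) volume 0 t :=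
    intervalIntegrable_mul_sub_rpow (by linarith [hα.1]) ht.le hmeas.aestronglyMeasurable
      fun s hs ↦ abs_le_of_abs_le_mul_one_add_rpow_neg (by linarith) hbound hs.1.le
  set K := ∫ s in Ioi (0:ℝ), |h s|
  have hK (t : ℝ) (ht : 0 < t) : ∫ s in (0:ℝ)..δ * t, |h s| ≤ K := by
    rw [integral_of_le (mul_pos hδ₀ ht).le]
    exact setIntegral_mono_set hint.abs (.of_forall fun s ↦ abs_nonneg _)
      (.of_forall Ioc_subset_Ioi_self)
  set C₁ := ((1 - δ) ^ (α - 1) - 1) * K / δ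
  set C₂ := C * δ ^ (-γ) * (1 - δ) ^ α / α
  refine ⟨fun t ht ↦ abs_rpow_mul_integral_sub_integral_le hα.2.le (mul_pos hδ₀ ht).le
      (mul_lt_of_lt_one_left ht hδ₁') hint (hker t ht),
    ⟨|C₁| + |C₂| + 1, by positivity, fun t ht ↦ ?_, fun t ht ↦ ?_⟩,
    tendsto_integral_Ioi_zero (tendsto_id.const_mul_atTop hδ₀)⟩
  · calc _ ≤ ((1 - δ) ^ (α - 1) - 1) * ∫ s in (0:ℝ)..δ * t, |h s| :=
          rpow_mul_integral_abs_mul_sub_rpow_sub_le hα.2.le hδ₀.le hδ₁' (by linarith)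
            ((intervalIntegrable_iff_integrableOn_Ioc_of_le (mul_pos hδ₀ (by linarith)).le).2
              (hint.mono_set Ioc_subset_Ioi_self))
      _ ≤ ((1 - δ) ^ (α - 1) - 1) * K :=
          mul_le_mul_of_nonneg_left (hK t (by linarith)) (sub_nonneg.2
            (one_le_rpow_of_pos_of_le_one_of_nonpos (by linarith) (by linarith)
              (by linarith [hα.2])))
      _ = C₁ * δ := (div_mul_cancel₀ _ hδ₀.ne').symm
      _ ≤ (|C₁| + |C₂| + 1) * δ := by gcongr; linarith [le_abs_self C₁, abs_nonneg C₂]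
  · calc _ ≤ C₂ * t ^ (1 - γ) :=
          rpow_mul_integral_abs_mul_sub_rpow_le hα.1 (by linarith) hδ₀ hδ₁'.le (by linarith)
            hmeas.aestronglyMeasurable hbound
      _ ≤ (|C₁| + |C₂| + 1) * t ^ (1 - γ) := by
          gcongr; linarith [le_abs_self C₂, abs_nonneg C₁]

theorem stmt19 (α γ C : ℝ) (hα : α ∈ Set.Ioo (0:ℝ) 1) (hγ : 1 < γ) (hC : 0 < C)
    (h : ℝ → ℝ) (hmeas : Measurable h)
    (hbound : ∀ s ≥ (0:ℝ), |h s| ≤ C * (1 + s) ^ (-γ)) :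
    ∀ δ ∈ Set.Ioo (0:ℝ) (1/2),
      (∀ t > (0:ℝ),
        |t ^ (1 - α) * (∫ s in (0:ℝ)..t, h s * (t - s) ^ (α - 1)) -
            ∫ s in Set.Ioi (0:ℝ), h s| ≤
          t ^ (1 - α) * (∫ s in (0:ℝ)..δ * t, |h s| * ((t - s) ^ (α - 1) - t ^ (α - 1))) +
          t ^ (1 - α) * (∫ s in δ * t..t, |h s| * (t - s) ^ (α - 1)) +
          ∫ s in Set.Ioi (δ * t), |h s|) ∧
      (∃ C' > (0:ℝ),
        (∀ t ≥ (2:ℝ),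
          t ^ (1 - α) * (∫ s in (0:ℝ)..δ * t, |h s| * ((t - s) ^ (α - 1) - t ^ (α - 1))) ≤
            C' * δ) ∧
        (∀ t ≥ (2:ℝ),
          t ^ (1 - α) * (∫ s in δ * t..t, |h s| * (t - s) ^ (α - 1)) ≤
            C' * t ^ (1 - γ))) ∧
      Tendsto (fun t : ℝ => ∫ s in Set.Ioi (δ * t), |h s|) atTop (nhds 0) :=
  stmt19_general α γ C hα hγ h hmeas hbound
end
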